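/- arXiv:1412.3177 — 2 statements merged into one kernel-verified Lean document; each statement's English description precedes it below -/
import Mathlib

section
/- Let V be a real inner product space with orthogonal projection pr_H onto a subspace H. Let v, α, β ∈ V with ⟨α,β⟩ = 0, ⟨v,α⟩ ≠ 0, ⟨v,β⟩ ≠ 0. Suppose the four vectors pr_H(v), pr_H(v) − (2⟨v,α⟩/⟨α,α⟩) pr_H(α), pr_H(v) − (2⟨v,β⟩/⟨β,β⟩) pr_H(β), and pr_H(v) − (2⟨v,α⟩/⟨α,α⟩) pr_H(α) − (2⟨v,β⟩/⟨β,β⟩) pr_H(β) all have the same norm. Then ⟨pr_H(α), pr_H(β)⟩ = 0. -/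
open scoped RealInnerProductSpace

/-! Writing `p = pr_H v`, `x = c_α • pr_H α` and `y = c_β • pr_H β`, each equation
`‖p - z‖ = ‖p‖` says `‖z‖² = 2⟪p, z⟫`. Applied to `z = x`, `y` and `x + y`, the
expansion of `‖x + y‖²` leaves `⟪x, y⟫ = 0`, and the reflection coefficients
`c_α`, `c_β` are nonzero because `⟪v, α⟫, ⟪v, β⟫ ≠ 0`. -/

section

variable {V : Type*} [NormedAddCommGroup V] [InnerProductSpace ℝ V]

theorem norm_sq_eq_two_mul_inner_of_norm_sub_eq_norm {p x : V} (h : ‖p - x‖ = ‖p‖) :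
    ‖x‖ ^ 2 = 2 * ⟪p, x⟫ := by
  have hsq := congrArg (· ^ 2) h
  simp only [norm_sub_sq_real] at hsq
  linarith

theorem inner_eq_zero_of_norm_sub_eq_norm {p x y : V} (hx : ‖p - x‖ = ‖p‖)
    (hy : ‖p - y‖ = ‖p‖) (hxy : ‖p - x - y‖ = ‖p‖) : ⟪x, y⟫ = 0 := by
  have ex := norm_sq_eq_two_mul_inner_of_norm_sub_eq_norm hx
  have ey := norm_sq_eq_two_mul_inner_of_norm_sub_eq_norm hy
  have exy := norm_sq_eq_two_mul_inner_of_norm_sub_eq_norm (p := p) (x := x + y)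
    (by rwa [← sub_sub])
  rw [norm_add_sq_real, inner_add_right] at exy
  linarith

theorem two_mul_inner_div_inner_self_ne_zero {v α : V} (h : ⟪v, α⟫ ≠ 0) :
    2 * ⟪v, α⟫ / ⟪α, α⟫ ≠ 0 :=
  div_ne_zero (mul_ne_zero two_ne_zero h) fun hα =>
    h (by rw [inner_self_eq_zero.mp hα, inner_zero_right])

end

theorem stmt1_general {V : Type*} [NormedAddCommGroup V] [InnerProductSpace ℝ V]
    [FiniteDimensional ℝ V] (H : Submodule ℝ V) (v α β : V)
    (hva : ⟪v, α⟫ ≠ 0) (hvb : ⟪v, β⟫ ≠ 0)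
    (h2 : ‖((Submodule.orthogonalProjectionOnto H v : V) -
        (2 * ⟪v, α⟫ / ⟪α, α⟫) • (Submodule.orthogonalProjectionOnto H α : V))‖ =
      ‖(Submodule.orthogonalProjectionOnto H v : V)‖)
    (h3 : ‖((Submodule.orthogonalProjectionOnto H v : V) -
        (2 * ⟪v, β⟫ / ⟪β, β⟫) • (Submodule.orthogonalProjectionOnto H β : V))‖ =
      ‖(Submodule.orthogonalProjectionOnto H v : V)‖)
    (h4 : ‖((Submodule.orthogonalProjectionOnto H v : V) -
        (2 * ⟪v, α⟫ / ⟪α, α⟫) • (Submodule.orthogonalProjectionOnto H α : V) -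
        (2 * ⟪v, β⟫ / ⟪β, β⟫) • (Submodule.orthogonalProjectionOnto H β : V))‖ =
      ‖(Submodule.orthogonalProjectionOnto H v : V)‖) :
    ⟪(Submodule.orthogonalProjectionOnto H α : V), (Submodule.orthogonalProjectionOnto H β : V)⟫ = 0 := by
  have hscaled := inner_eq_zero_of_norm_sub_eq_norm h2 h3 h4
  rw [real_inner_smul_left, real_inner_smul_right] at hscaled
  simpa only [mul_eq_zero, two_mul_inner_div_inner_self_ne_zero hva,
    two_mul_inner_div_inner_self_ne_zero hvb, false_or] using hscaled

/-- If the projections of `v` and of its reflections in the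
hyperplanes orthogonal to `α`, to `β`, and to both, all have the same norm,
then `⟪pr_H α, pr_H β⟫ = 0`. -/
theorem stmt1 {V : Type*} [NormedAddCommGroup V] [InnerProductSpace ℝ V]
    [FiniteDimensional ℝ V] (H : Submodule ℝ V) (v α β : V)
    (hab : ⟪α, β⟫ = 0) (hva : ⟪v, α⟫ ≠ 0) (hvb : ⟪v, β⟫ ≠ 0)
    (h2 : ‖((Submodule.orthogonalProjectionOnto H v : V) -
        (2 * ⟪v, α⟫ / ⟪α, α⟫) • (Submodule.orthogonalProjectionOnto H α : V))‖ =
      ‖(Submodule.orthogonalProjectionOnto H v : V)‖)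
    (h3 : ‖((Submodule.orthogonalProjectionOnto H v : V) -
        (2 * ⟪v, β⟫ / ⟪β, β⟫) • (Submodule.orthogonalProjectionOnto H β : V))‖ =
      ‖(Submodule.orthogonalProjectionOnto H v : V)‖)
    (h4 : ‖((Submodule.orthogonalProjectionOnto H v : V) -
        (2 * ⟪v, α⟫ / ⟪α, α⟫) • (Submodule.orthogonalProjectionOnto H α : V) -
        (2 * ⟪v, β⟫ / ⟪β, β⟫) • (Submodule.orthogonalProjectionOnto H β : V))‖ =
      ‖(Submodule.orthogonalProjectionOnto H v : V)‖) :
    ⟪(Submodule.orthogonalProjectionOnto H α : V), (Submodule.orthogonalProjectionOnto H β : V)⟫ = 0 :=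
  stmt1_general H v α β hva hvb h2 h3 h4
end

section
/- Let α', β' be roots of a reduced crystallographic root system with α'+β' and α'−β' both roots and α' ≠ ±β'. Then either (i) the system contains a G₂ subsystem and α', β' are short roots at angle π/3 or 2π/3, or (ii) ⟨α',β'⟩ = 0, α' and β' are short, and α'±β' are long roots. -/
open scoped RealInnerProductSpace

/-
Write `a = ‖α‖²`, `b = ‖β‖²`, `t = ⟪α, β⟫`; replacing `β` by `-β` we may assume `t ≥ 0`, and then
only the root `α + β` is needed. By strict Cauchy–Schwarz the Cartan integers `2t/b` and `2t/a`
have product `4t²/(ab) < 4`. If `t = 0`, the Cartan integer `2⟪α, α + β⟫/‖α + β‖² = 2a/(a + b)`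
lies strictly between `0` and `2`, so `a = b`. If `t > 0` and `a ≤ b`, the smaller Cartan integer
`2t/b` is `1`, so `b = 2t = n a` with `n ∈ {1, 2, 3}`, and then `2⟪α, α + β⟫/‖α + β‖²` equals
`(n + 2)/(2n + 1)`, an integer only for `n = 1`.
-/

theorem sq_real_inner_lt_of_forall_ne_smul {F : Type*} [NormedAddCommGroup F]
    [InnerProductSpace ℝ F] {x y : F} (hy : y ≠ 0) (h : ∀ c : ℝ, x ≠ c • y) :
    ⟪x, y⟫ ^ 2 < ‖x‖ ^ 2 * ‖y‖ ^ 2 := by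
  have hx : x ≠ 0 := by simpa using h 0
  have hne : |⟪x, y⟫| ≠ ‖x‖ * ‖y‖ := fun heq => by
    obtain ⟨r, -, hr⟩ := (norm_inner_eq_norm_iff (𝕜 := ℝ) hy hx).1 (by
      rwa [Real.norm_eq_abs, real_inner_comm, mul_comm])
    exact h r hr
  rw [← mul_pow, ← sq_abs]
  exact pow_lt_pow_left₀ ((abs_real_inner_le_norm x y).lt_of_ne hne) (abs_nonneg _) two_ne_zero

theorem eq_of_two_mul_eq_int_mul_add {a b : ℝ} (ha : 0 < a) (hb : 0 < b)
    (hk : ∃ k : ℤ, 2 * a = k * (a + b)) : a = b := by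
  obtain ⟨k, hk⟩ := hk
  have hk1 : k = 1 := by
    have hk0 : 0 < k := by
      have : (0 : ℝ) < k := by nlinarith
      exact_mod_cast this
    have hk2 : k < 2 := by
      have : (k : ℝ) < 2 := by nlinarith
      exact_mod_cast this
    omega
  rw [hk1, Int.cast_one] at hk
  linarith

theorem eq_and_two_mul_eq_of_int_pairings_of_le {a b t : ℝ} (ha : 0 < a) (hab : a ≤ b)
    (ht : 0 < t) (hcs : t ^ 2 < a * b) (hm : ∃ m : ℤ, 2 * t = m * b)
    (hn : ∃ n : ℤ, 2 * t = n * a) (hk : ∃ k : ℤ, 2 * (a + t) = k * (a + b + 2 * t)) :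
    a = b ∧ 2 * t = a := by
  obtain ⟨m, hm⟩ := hm
  obtain ⟨n, hn⟩ := hn
  obtain ⟨k, hk⟩ := hk
  have hb : 0 < b := ha.trans_le hab
  have hm0 : 0 < m := by
    have : (0 : ℝ) < m := by nlinarith
    exact_mod_cast this
  have hmn : m ≤ n := by
    have : (m : ℝ) ≤ n := by nlinarith
    exact_mod_cast this
  have hmn4 : m * n < 4 := by
    have : (m * n : ℝ) < 4 := by nlinarith
    exact_mod_cast this
  obtain rfl : m = 1 := by nlinarith
  rw [Int.cast_one, one_mul] at hm
  have hnk : n + 2 = k * (2 * n + 1) := by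
    have : ((n + 2 : ℤ) : ℝ) * a = ((k * (2 * n + 1) : ℤ) : ℝ) * a := by
      push_cast
      linear_combination hk + (2 * k - 1) * hn - k * hm
    exact_mod_cast mul_right_cancel₀ ha.ne' this
  obtain rfl : n = 1 := by
    have : n < 4 := by omega
    interval_cases n <;> omega
  rw [Int.cast_one, one_mul] at hn
  constructor <;> linarith

theorem eq_and_of_int_pairings {a b t : ℝ} (ha : 0 < a) (hb : 0 < b) (ht : 0 ≤ t)
    (hcs : t ^ 2 < a * b) (hm : ∃ m : ℤ, 2 * t = m * b) (hn : ∃ n : ℤ, 2 * t = n * a)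
    (hk : ∃ k : ℤ, 2 * (a + t) = k * (a + b + 2 * t))
    (hl : ∃ l : ℤ, 2 * (b + t) = l * (a + b + 2 * t)) :
    a = b ∧ (t = 0 ∨ 2 * t = a) := by
  rcases ht.eq_or_lt with rfl | ht
  · exact ⟨eq_of_two_mul_eq_int_mul_add ha hb (by simpa using hk), Or.inl rfl⟩
  rcases le_total a b with hab | hba
  · exact (eq_and_two_mul_eq_of_int_pairings_of_le ha hab ht hcs hm hn hk).imp_right Or.inr
  · obtain ⟨l, hl⟩ := hl
    obtain ⟨hba, htb⟩ := eq_and_two_mul_eq_of_int_pairings_of_le hb hba ht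
      (by rwa [mul_comm]) hn hm ⟨l, by linear_combination hl⟩
    exact ⟨hba.symm, Or.inr (hba ▸ htb)⟩

theorem norm_eq_and_of_add_mem {V : Type*} [NormedAddCommGroup V] [InnerProductSpace ℝ V]
    {Δ : Set V}
    (hcrys : ∀ γ ∈ Δ, ∀ δ ∈ Δ, ∃ m : ℤ, 2 * ⟪γ, δ⟫ = (m : ℝ) * ⟪δ, δ⟫)
    {α β : V} (hα : α ∈ Δ) (hβ : β ∈ Δ) (hβ0 : β ≠ 0) (hind : ∀ c : ℝ, α ≠ c • β)
    (hsum : α + β ∈ Δ) (ht : 0 ≤ ⟪α, β⟫) :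
    ‖α‖ = ‖β‖ ∧ (⟪α, β⟫ = 0 ∨ 2 * ⟪α, β⟫ = ‖α‖ ^ 2) := by
  simp only [real_inner_self_eq_norm_sq] at hcrys
  have hα0 : α ≠ 0 := by simpa using hind 0
  obtain ⟨k, hk⟩ := hcrys α hα _ hsum
  obtain ⟨l, hl⟩ := hcrys β hβ _ hsum
  rw [inner_add_right, real_inner_self_eq_norm_sq, norm_add_sq_real] at hk
  rw [inner_add_right, real_inner_self_eq_norm_sq, real_inner_comm, norm_add_sq_real] at hl
  obtain ⟨hab, htab⟩ := eq_and_of_int_pairings (by positivity) (by positivity) ht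
    (sq_real_inner_lt_of_forall_ne_smul hβ0 hind) (hcrys α hα β hβ)
    (by simpa only [real_inner_comm] using hcrys β hβ α hα)
    ⟨k, by linear_combination hk⟩ ⟨l, by linear_combination hl⟩
  exact ⟨(pow_left_inj₀ (norm_nonneg _) (norm_nonneg _) two_ne_zero).1 hab, htab⟩

theorem stmt15_general {V : Type*} [NormedAddCommGroup V] [InnerProductSpace ℝ V]
    (Δ : Set V) (h0 : (0 : V) ∉ Δ)
    (hneg : ∀ γ ∈ Δ, -γ ∈ Δ)
    (hcrys : ∀ γ ∈ Δ, ∀ δ ∈ Δ, ∃ m : ℤ, 2 * ⟪γ, δ⟫ = (m : ℝ) * ⟪δ, δ⟫)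
    (α β : V) (hα : α ∈ Δ) (hβ : β ∈ Δ) (hind : ∀ c : ℝ, α ≠ c • β)
    (hsum : α + β ∈ Δ) (hdiff : α - β ∈ Δ) :
    (‖α‖ = ‖β‖ ∧ (2 * ⟪α, β⟫ = ‖α‖ ^ 2 ∨ 2 * ⟪α, β⟫ = -‖α‖ ^ 2) ∧
        ∃ γ ∈ Δ, ‖γ‖ ^ 2 = 3 * ‖α‖ ^ 2) ∨
    (⟪α, β⟫ = 0 ∧ ‖α‖ = ‖β‖ ∧
        ‖α + β‖ ^ 2 = 2 * ‖α‖ ^ 2 ∧ ‖α - β‖ ^ 2 = 2 * ‖α‖ ^ 2) := by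
  have hβ0 : β ≠ 0 := fun h => h0 (h ▸ hβ)
  obtain ⟨hnorm, hpair⟩ : ‖α‖ = ‖β‖ ∧
      (⟪α, β⟫ = 0 ∨ 2 * ⟪α, β⟫ = ‖α‖ ^ 2 ∨ 2 * ⟪α, β⟫ = -‖α‖ ^ 2) := by
    rcases le_total 0 ⟪α, β⟫ with ht | ht
    · obtain ⟨hnorm, h⟩ := norm_eq_and_of_add_mem hcrys hα hβ hβ0 hind hsum ht
      exact ⟨hnorm, h.imp_right Or.inl⟩
    · have h := norm_eq_and_of_add_mem hcrys hα (hneg β hβ) (neg_ne_zero.2 hβ0)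
        (fun c => by simpa using hind (-c)) (by rwa [← sub_eq_add_neg])
        (by rwa [inner_neg_right, neg_nonneg])
      simp only [norm_neg, inner_neg_right, neg_eq_zero] at h
      exact ⟨h.1, h.2.imp_right fun h => Or.inr (by linarith)⟩
  rcases hpair with ht | ht | ht
  · refine Or.inr ⟨ht, hnorm, ?_, ?_⟩
    · rw [norm_add_sq_real, ht, ← hnorm]; ring
    · rw [norm_sub_sq_real, ht, ← hnorm]; ring
  · exact Or.inl ⟨hnorm, Or.inl ht, α + β, hsum, by rw [norm_add_sq_real, ← hnorm]; linarith⟩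
  · exact Or.inl ⟨hnorm, Or.inr ht, α - β, hdiff, by rw [norm_sub_sq_real, ← hnorm]; linarith⟩

/-- In a reduced crystallographic root system `Δ`, if `α, β,
α + β, α - β` are all roots and `α` is not a multiple of `β`, then either
(i) `α` and `β` are equal-length (short) roots at angle `π/3` or `2π/3`
(so `cos` of the angle is `±1/2`) and `Δ` contains a root of squared length
`3‖α‖²` — the G₂ configuration — or (ii) `⟪α, β⟫ = 0`, `‖α‖ = ‖β‖`, and
`α ± β` are long roots with `‖α ± β‖² = 2‖α‖²` — the B₂ = C₂ configuration. -/
theorem stmt15 {V : Type*} [NormedAddCommGroup V] [InnerProductSpace ℝ V]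
    (Δ : Set V) (hfin : Δ.Finite) (h0 : (0 : V) ∉ Δ)
    (hneg : ∀ γ ∈ Δ, -γ ∈ Δ)
    (hrefl : ∀ γ ∈ Δ, ∀ δ ∈ Δ, δ - (2 * ⟪δ, γ⟫ / ⟪γ, γ⟫) • γ ∈ Δ)
    (hcrys : ∀ γ ∈ Δ, ∀ δ ∈ Δ, ∃ m : ℤ, 2 * ⟪γ, δ⟫ = (m : ℝ) * ⟪δ, δ⟫)
    (hred : ∀ γ ∈ Δ, ∀ c : ℝ, c • γ ∈ Δ → c = 1 ∨ c = -1)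
    (α β : V) (hα : α ∈ Δ) (hβ : β ∈ Δ) (hind : ∀ c : ℝ, α ≠ c • β)
    (hsum : α + β ∈ Δ) (hdiff : α - β ∈ Δ) :
    (‖α‖ = ‖β‖ ∧ (2 * ⟪α, β⟫ = ‖α‖ ^ 2 ∨ 2 * ⟪α, β⟫ = -‖α‖ ^ 2) ∧
        ∃ γ ∈ Δ, ‖γ‖ ^ 2 = 3 * ‖α‖ ^ 2) ∨
    (⟪α, β⟫ = 0 ∧ ‖α‖ = ‖β‖ ∧
        ‖α + β‖ ^ 2 = 2 * ‖α‖ ^ 2 ∧ ‖α - β‖ ^ 2 = 2 * ‖α‖ ^ 2) :=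
  stmt15_general Δ h0 hneg hcrys α β hα hβ hind hsum hdiff
end
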